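/- arXiv:2603.16771 — 4 statements merged into one kernel-verified Lean document; each statement's English description precedes it below -/
import Mathlib

section
/- Let H be a sub-skew brace of a finite skew left brace B. Then Pb(B) ≤ Pb(H). -/
/-- A skew left brace structure on a type carrying both an additive and a
multiplicative group structure: the compatibility (skew left distributivity)
`a ∘ (b + c) = (a ∘ b) - a + (a ∘ c)` holds, and the two identities coincide. -/
class SkewBrace (B : Type*) [AddGroup B] [Group B] : Prop where
  compat : ∀ a b c : B, a * (b + c) = a * b + -a + a * c
  zero_eq_one : (0 : B) = 1

section Defs

variable {B : Type*} [AddGroup B] [Group B]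

/-- `λ_a(b) = -a + (a ∘ b)`. -/
def lambdaMap (a b : B) : B := -a + a * b

/-- `a * b := -a + (a ∘ b) - b` (the star product of a skew brace). -/
def starOp (a b : B) : B := -a + a * b + -b

/-- The additive commutator `[a,b]⁺ = a + b - a - b`. -/
def addComB (a b : B) : B := a + b + -a + -b

/-- The multiplicative commutator `[a,b]∘ = a ∘ b ∘ a⁻¹ ∘ b⁻¹`. -/
def mulComB (a b : B) : B := a * b * a⁻¹ * b⁻¹

/-- The brace centralizer `Cb_B(x) = {b | x*b = b*x = [x,b]⁺ = 1}`. -/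
def Cb (x : B) : Set B := {b | starOp x b = 0 ∧ starOp b x = 0 ∧ addComB x b = 0}

/-- The annihilator `Ann(B) = Ker λ ∩ Z(B,+) ∩ Z(B,∘)` as a set. -/
def AnnSet (B : Type*) [AddGroup B] [Group B] : Set B :=
  {a | (∀ b : B, a + b = a * b) ∧ (∀ b : B, a + b = b + a) ∧ (∀ b : B, a * b = b * a)}

/-- A sub-skew brace: a subset closed under both group operations and inverses. -/
def IsSubSkewBrace (H : Set B) : Prop :=
  (0 : B) ∈ H ∧ (∀ a ∈ H, ∀ b ∈ H, a + b ∈ H) ∧ (∀ a ∈ H, -a ∈ H) ∧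
    (∀ a ∈ H, ∀ b ∈ H, a * b ∈ H) ∧ (∀ a ∈ H, a⁻¹ ∈ H)

/-- The commuting probability of a (finite) skew brace. -/
noncomputable def Pb (B : Type*) [AddGroup B] [Group B] : ℚ :=
  (Nat.card {p : B × B //
      starOp p.1 p.2 = 0 ∧ starOp p.2 p.1 = 0 ∧ addComB p.1 p.2 = 0} : ℚ)
    / (Nat.card B : ℚ) ^ 2

/-- The commuting probability of a sub-skew brace `H` of `B`. -/
noncomputable def PbSub (H : Set B) : ℚ :=
  (Nat.card {p : B × B // p.1 ∈ H ∧ p.2 ∈ H ∧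
      starOp p.1 p.2 = 0 ∧ starOp p.2 p.1 = 0 ∧ addComB p.1 p.2 = 0} : ℚ)
    / (Nat.card H : ℚ) ^ 2

end Defs

section Aux

variable {B : Type*} [AddGroup B] [Group B]

lemma sb_zo [SkewBrace B] : (0 : B) = 1 := SkewBrace.zero_eq_one

lemma sb_mulZero [SkewBrace B] (a : B) : a * (0 : B) = a := by rw [sb_zo, mul_one]

lemma sb_lamAdd [SkewBrace B] (a b c : B) :
    lambdaMap a (b + c) = lambdaMap a b + lambdaMap a c := by
  simp only [lambdaMap, SkewBrace.compat, add_assoc]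

lemma sb_lamZero [SkewBrace B] (a : B) : lambdaMap a 0 = 0 := by
  rw [lambdaMap, sb_mulZero, neg_add_cancel]

lemma sb_lamNeg [SkewBrace B] (a b : B) : lambdaMap a (-b) = -lambdaMap a b := by
  have h : lambdaMap a b + lambdaMap a (-b) = 0 := by
    rw [← sb_lamAdd, add_neg_cancel, sb_lamZero]
  exact (neg_eq_of_add_eq_zero_right h).symm

lemma sb_mulNeg [SkewBrace B] (a b : B) : a * (-b) = a + -(a * b) + a := by
  have h : a = a * b + -a + a * (-b) := by
    have := SkewBrace.compat a b (-b)
    rwa [add_neg_cancel, sb_mulZero] at this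
  have h2 : a * b + -a + (a + -(a * b) + a) = a := by simp [add_assoc]
  exact add_left_cancel (h.symm.trans h2.symm)

lemma sb_lamLam [SkewBrace B] (a b c : B) :
    lambdaMap a (lambdaMap b c) = lambdaMap (a * b) c := by
  simp only [lambdaMap, SkewBrace.compat, sb_mulNeg, mul_assoc, add_assoc,
    neg_add_cancel_left, add_neg_cancel_left, neg_add_cancel, add_zero]

lemma sb_lamOne [SkewBrace B] (b : B) : lambdaMap (1 : B) b = b := by
  rw [lambdaMap, one_mul, ← sb_zo, neg_zero, zero_add]

lemma sb_lamInj (a : B) {b c : B} (h : lambdaMap a b = lambdaMap a c) : b = c := by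
  rw [lambdaMap, lambdaMap] at h
  exact mul_left_cancel (add_left_cancel h)

lemma sb_mulEq (a b : B) : a * b = a + lambdaMap a b := by
  rw [lambdaMap, add_neg_cancel_left]

lemma sb_addcom_iff {x y : B} : addComB x y = 0 ↔ x + y = y + x := by
  rw [addComB, add_assoc, ← neg_add_rev, add_neg_eq_zero]

lemma sb_mem_cb_iff {x y : B} :
    y ∈ Cb x ↔ lambdaMap x y = y ∧ lambdaMap y x = x ∧ x + y = y + x := by
  have e1 : starOp x y = 0 ↔ lambdaMap x y = y := by
    rw [starOp, lambdaMap, add_neg_eq_zero]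
  have e2 : starOp y x = 0 ↔ lambdaMap y x = x := by
    rw [starOp, lambdaMap, add_neg_eq_zero]
  exact and_congr e1 (and_congr e2 sb_addcom_iff)

lemma sb_cb_mul_comm {x y : B} (hy : y ∈ Cb x) : x * y = y * x := by
  obtain ⟨h1, h2, h3⟩ := sb_mem_cb_iff.mp hy
  rw [sb_mulEq, sb_mulEq, h1, h2, h3]

lemma sb_add_neg_comm {x y : B} (h : x + y = y + x) : x + -y = -y + x := by
  have h2 : y + (x + -y) = y + (-y + x) := by
    rw [add_neg_cancel_left, ← add_assoc, ← h, add_assoc, add_neg_cancel, add_zero]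
  exact add_left_cancel h2

/-- The brace centralizer as a subgroup of `(B, ∘)`. -/
def cbSubgroup [SkewBrace B] (x : B) : Subgroup B where
  carrier := Cb x
  one_mem' := by
    show (1 : B) ∈ Cb x
    rw [← sb_zo, sb_mem_cb_iff]
    exact ⟨sb_lamZero x, by rw [sb_zo]; exact sb_lamOne x, by rw [add_zero, zero_add]⟩
  mul_mem' := by
    intro y z hy hz
    show y * z ∈ Cb x
    obtain ⟨hy1, hy2, hy3⟩ := sb_mem_cb_iff.mp hy
    obtain ⟨hz1, hz2, hz3⟩ := sb_mem_cb_iff.mp hz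
    have hxy : x * y = y * x := sb_cb_mul_comm hy
    have hlxz : lambdaMap x (lambdaMap y z) = lambdaMap y z := by
      rw [sb_lamLam, hxy, ← sb_lamLam, hz1]
    refine sb_mem_cb_iff.mpr ⟨?_, ?_, ?_⟩
    · rw [sb_mulEq y z, sb_lamAdd, hy1, hlxz, ← sb_mulEq]
    · rw [← sb_lamLam, hz2, hy2]
    · have hxw : x + lambdaMap y z = lambdaMap y z + x := by
        calc x + lambdaMap y z = lambdaMap y x + lambdaMap y z := by rw [hy2]
        _ = lambdaMap y (x + z) := (sb_lamAdd y x z).symm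
        _ = lambdaMap y (z + x) := by rw [hz3]
        _ = lambdaMap y z + x := by rw [sb_lamAdd, hy2]
      rw [sb_mulEq y z]
      calc x + (y + lambdaMap y z) = (x + y) + lambdaMap y z := by rw [add_assoc]
      _ = y + (x + lambdaMap y z) := by rw [hy3, add_assoc]
      _ = y + lambdaMap y z + x := by rw [hxw, add_assoc]
  inv_mem' := by
    intro y hy
    show y⁻¹ ∈ Cb x
    obtain ⟨hy1, hy2, hy3⟩ := sb_mem_cb_iff.mp hy
    have hxy : x * y = y * x := sb_cb_mul_comm hy
    have lyinv : lambdaMap y y⁻¹ = -y := by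
      rw [lambdaMap, mul_inv_cancel, ← sb_zo, add_zero]
    have h2 : lambdaMap y⁻¹ x = x := by
      apply sb_lamInj y
      rw [sb_lamLam, mul_inv_cancel, sb_lamOne, hy2]
    have h1 : lambdaMap x y⁻¹ = y⁻¹ := by
      apply sb_lamInj y
      rw [sb_lamLam, ← hxy, ← sb_lamLam, lyinv, sb_lamNeg, hy1, ← lyinv]
    have hinv : y⁻¹ = lambdaMap y⁻¹ (-y) := by
      apply sb_lamInj y
      rw [sb_lamLam, mul_inv_cancel, sb_lamOne, lyinv]
    refine sb_mem_cb_iff.mpr ⟨h1, h2, ?_⟩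
    calc x + y⁻¹ = lambdaMap y⁻¹ x + lambdaMap y⁻¹ (-y) := by rw [h2, ← hinv]
    _ = lambdaMap y⁻¹ (x + -y) := (sb_lamAdd _ _ _).symm
    _ = lambdaMap y⁻¹ (-y + x) := by rw [sb_add_neg_comm hy3]
    _ = lambdaMap y⁻¹ (-y) + lambdaMap y⁻¹ x := sb_lamAdd _ _ _
    _ = y⁻¹ + x := by rw [h2, ← hinv]

/-- A sub-skew brace as a subgroup of `(B, ∘)`. -/
def subToSubgroup [SkewBrace B] (H : Set B) (hH : IsSubSkewBrace H) : Subgroup B where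
  carrier := H
  one_mem' := by show (1 : B) ∈ H; rw [← sb_zo]; exact hH.1
  mul_mem' := fun ha hb => hH.2.2.2.1 _ ha _ hb
  inv_mem' := fun ha => hH.2.2.2.2 _ ha

lemma sb_key_card [Finite B] (Hs K : Subgroup B) :
    Nat.card K * Nat.card Hs ≤ Nat.card ↥(Hs ⊓ K) * Nat.card B := by
  have h1 : Nat.card ↥(Hs.subgroupOf K) * Hs.relIndex K = Nat.card K :=
    Subgroup.card_mul_index (Hs.subgroupOf K)
  have h2 : Nat.card ↥(Hs.subgroupOf K) = Nat.card ↥(Hs ⊓ K) := by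
    rw [← Subgroup.inf_subgroupOf_right]
    exact Nat.card_congr (Subgroup.subgroupOfEquivOfLe inf_le_right).toEquiv
  have h1' : Nat.card ↥(Hs ⊓ K) * Hs.relIndex K = Nat.card K := by rw [← h2]; exact h1
  have h4 : Hs.relIndex K ≤ Hs.index := by
    have hne : Hs.relIndex ⊤ ≠ 0 := by
      rw [Subgroup.relIndex_top_right]; exact Subgroup.index_ne_zero_of_finite
    have := Subgroup.relIndex_le_of_le_right (le_top : K ≤ ⊤) hne
    rwa [Subgroup.relIndex_top_right] at this
  have h5 : Nat.card Hs * Hs.index = Nat.card B := Subgroup.card_mul_index Hs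
  calc Nat.card K * Nat.card Hs
      = Nat.card ↥(Hs ⊓ K) * Hs.relIndex K * Nat.card Hs := by rw [h1']
    _ ≤ Nat.card ↥(Hs ⊓ K) * Hs.index * Nat.card Hs := by
        exact Nat.mul_le_mul_right _ (Nat.mul_le_mul_left _ h4)
    _ = Nat.card ↥(Hs ⊓ K) * (Nat.card Hs * Hs.index) := by ring
    _ = Nat.card ↥(Hs ⊓ K) * Nat.card B := by rw [h5]

lemma sb_card_pair [Fintype B] (P : B → B → Prop) :
    Nat.card {p : B × B // P p.1 p.2} = ∑ x : B, Nat.card {y : B // P x y} := by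
  classical
  rw [Nat.card_congr (Equiv.subtypeProdEquivSigmaSubtype P), Nat.card_eq_fintype_card,
    Fintype.card_sigma]
  exact Finset.sum_congr rfl fun x _ => Nat.card_eq_fintype_card.symm

end Aux

/-- For a sub-skew brace `H` of a finite skew brace `B`, `Pb(B) ≤ Pb(H)`. -/
theorem stmt15 {B : Type*} [AddGroup B] [Group B] [SkewBrace B] [Finite B]
    (H : Set B) (hH : IsSubSkewBrace H) :
    Pb B ≤ PbSub H := by
  classical
  have instF : Fintype B := Fintype.ofFinite B
  have instNe : Nonempty B := ⟨(0 : B)⟩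
  have instNeH : Nonempty H := ⟨⟨0, hH.1⟩⟩
  let R : B → B → Prop := fun x y => starOp x y = 0 ∧ starOp y x = 0 ∧ addComB x y = 0
  have Rsymm : ∀ x y : B, R x y ↔ R y x := by
    intro x y
    constructor <;> rintro ⟨a, b, c⟩ <;>
      exact ⟨b, a, by rw [sb_addcom_iff] at c ⊢; exact c.symm⟩
  let Hs : Subgroup B := subToSubgroup H hH
  have hHs : Nat.card Hs = Nat.card H := rfl
  have stepA : ∀ x : B,
      Nat.card {y : B // R x y} * Nat.card H ≤
        Nat.card {y : B // y ∈ H ∧ R x y} * Nat.card B := by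
    intro x
    have e1 : Nat.card {y : B // R x y} = Nat.card (cbSubgroup x) :=
      Nat.card_congr (Equiv.subtypeEquivRight fun y => Iff.rfl)
    have e2 : Nat.card {y : B // y ∈ H ∧ R x y} = Nat.card ↥(Hs ⊓ cbSubgroup x) :=
      Nat.card_congr (Equiv.subtypeEquivRight fun y => by
        rw [Subgroup.mem_inf]; exact Iff.rfl)
    rw [e1, e2, ← hHs]
    exact sb_key_card Hs (cbSubgroup x)
  have stepB : ∀ x : B,
      Nat.card {y : B // x ∈ H ∧ R x y} * Nat.card H ≤
        Nat.card {y : B // x ∈ H ∧ y ∈ H ∧ R x y} * Nat.card B := by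
    intro x
    by_cases hx : x ∈ H
    · have e1 : Nat.card {y : B // x ∈ H ∧ R x y} = Nat.card {y : B // R x y} :=
        Nat.card_congr (Equiv.subtypeEquivRight fun y => and_iff_right hx)
      have e2 : Nat.card {y : B // x ∈ H ∧ y ∈ H ∧ R x y}
          = Nat.card {y : B // y ∈ H ∧ R x y} :=
        Nat.card_congr (Equiv.subtypeEquivRight fun y => and_iff_right hx)
      rw [e1, e2]; exact stepA x
    · have he : IsEmpty {y : B // x ∈ H ∧ R x y} := ⟨fun y => hx y.2.1⟩
      rw [Nat.card_of_isEmpty, zero_mul]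
      exact Nat.zero_le _
  have ineqA : Nat.card {p : B × B // R p.1 p.2} * Nat.card H ≤
      Nat.card {p : B × B // p.2 ∈ H ∧ R p.1 p.2} * Nat.card B := by
    rw [sb_card_pair (fun x y => R x y), sb_card_pair (fun x y => y ∈ H ∧ R x y),
      Finset.sum_mul, Finset.sum_mul]
    exact Finset.sum_le_sum fun x _ => stepA x
  have swapEq : Nat.card {p : B × B // p.2 ∈ H ∧ R p.1 p.2}
      = Nat.card {p : B × B // p.1 ∈ H ∧ R p.1 p.2} :=
    Nat.card_congr ((Equiv.prodComm B B).subtypeEquiv fun p => by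
      simp only [Equiv.prodComm_apply, Prod.fst_swap, Prod.snd_swap]
      exact and_congr Iff.rfl (Rsymm p.1 p.2))
  have ineqB : Nat.card {p : B × B // p.1 ∈ H ∧ R p.1 p.2} * Nat.card H ≤
      Nat.card {p : B × B // p.1 ∈ H ∧ p.2 ∈ H ∧ R p.1 p.2} * Nat.card B := by
    rw [sb_card_pair (fun x y => x ∈ H ∧ R x y),
      sb_card_pair (fun x y => x ∈ H ∧ y ∈ H ∧ R x y), Finset.sum_mul, Finset.sum_mul]
    exact Finset.sum_le_sum fun x _ => stepB x
  set N := Nat.card {p : B × B // R p.1 p.2} with hNdef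
  set L := Nat.card {p : B × B // p.1 ∈ H ∧ p.2 ∈ H ∧ R p.1 p.2} with hLdef
  set n := Nat.card B with hndef
  set h := Nat.card H with hhdef
  have final : N * (h * h) ≤ L * (n * n) := by
    calc N * (h * h) = N * h * h := by ring
      _ ≤ Nat.card {p : B × B // p.2 ∈ H ∧ R p.1 p.2} * n * h :=
          Nat.mul_le_mul_right _ ineqA
      _ = Nat.card {p : B × B // p.1 ∈ H ∧ R p.1 p.2} * h * n := by rw [swapEq]; ring
      _ ≤ L * n * n := Nat.mul_le_mul_right _ ineqB
      _ = L * (n * n) := by ring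
  have hn0 : 0 < n := Nat.card_pos
  have hh0 : 0 < h := Nat.card_pos
  have hnq : (0 : ℚ) < (n : ℚ) := by exact_mod_cast hn0
  have hhq : (0 : ℚ) < (h : ℚ) := by exact_mod_cast hh0
  have ePb : Pb B = (N : ℚ) / (n : ℚ) ^ 2 := rfl
  have ePbSub : PbSub H = (L : ℚ) / (h : ℚ) ^ 2 := rfl
  rw [ePb, ePbSub, div_le_div_iff₀ (by positivity) (by positivity)]
  rw [sq, sq]
  exact_mod_cast final
end

section
/- Let (B, +, ∘) be a skew left brace of order p² for a prime p. Then Pb(B) = 1 or Pb(B) = (2p - 1)/p². -/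
section SBLemmas
variable {B : Type*} [AddGroup B] [Group B] [SkewBrace B]

lemma sb_zero_eq_one : (0 : B) = 1 := SkewBrace.zero_eq_one

lemma sb_mul_zero (a : B) : a * (0 : B) = a := by rw [sb_zero_eq_one, mul_one]

lemma lam_one (x : B) : lambdaMap (1 : B) x = x := by
  rw [lambdaMap, one_mul, ← sb_zero_eq_one, neg_zero, zero_add]

lemma lam_add (a x y : B) : lambdaMap a (x + y) = lambdaMap a x + lambdaMap a y := by
  simp only [lambdaMap, SkewBrace.compat a x y, add_assoc]

lemma sb_mul_neg (a b : B) : a * (-b) = a + -(a * b) + a := by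
  have h := SkewBrace.compat a (-b) b
  rw [neg_add_cancel, sb_mul_zero] at h
  have h2 : a * (-b) + (-a + a * b) = (a + -(a * b) + a) + (-a + a * b) := by
    rw [← add_assoc, ← h]
    simp [add_assoc]
  exact add_right_cancel h2

lemma lam_mul (a b x : B) : lambdaMap (a * b) x = lambdaMap a (lambdaMap b x) := by
  rw [lambdaMap, lambdaMap, lambdaMap, SkewBrace.compat, sb_mul_neg, ← mul_assoc]
  simp [add_assoc]

lemma lam_zero (a : B) : lambdaMap a 0 = 0 := by
  rw [lambdaMap, sb_mul_zero, neg_add_cancel]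

/-- `λ_a` as an additive homomorphism. -/
def lamAddHom (a : B) : B →+ B := AddMonoidHom.mk' (lambdaMap a) (lam_add a)

lemma lam_neg (a x : B) : lambdaMap a (-x) = -(lambdaMap a x) := map_neg (lamAddHom a) x

/-- `λ` as a monoid homomorphism to permutations. -/
def lamHom (B : Type*) [AddGroup B] [Group B] [SkewBrace B] : B →* Equiv.Perm B where
  toFun a := { toFun := lambdaMap a, invFun := lambdaMap a⁻¹,
               left_inv := fun x => by rw [← lam_mul, inv_mul_cancel, lam_one],
               right_inv := fun x => by rw [← lam_mul, mul_inv_cancel, lam_one] }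
  map_one' := Equiv.ext fun x => lam_one x
  map_mul' a b := Equiv.ext fun x => lam_mul a b x

lemma lamHom_apply (a x : B) : lamHom B a x = lambdaMap a x := rfl

end SBLemmas

theorem skewBraceCountAux {B : Type*} [AddGroup B] [Group B] [SkewBrace B] [Finite B]
    (p : ℕ) (hp : p.Prime) (h : Nat.card B = p ^ 2) :
    (Nat.card {x : B × B //
      starOp x.1 x.2 = 0 ∧ starOp x.2 x.1 = 0 ∧ addComB x.1 x.2 = 0} = p ^ 2 * p ^ 2)
    ∨ (Nat.card {x : B × B //
      starOp x.1 x.2 = 0 ∧ starOp x.2 x.1 = 0 ∧ addComB x.1 x.2 = 0} = p * p ^ 2 + (p ^ 2 - p) * p) := by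
  classical
  haveI : Fact p.Prime := ⟨hp⟩
  haveI : Fintype B := Fintype.ofFinite B
  have hmul : ∀ a b : B, a * b = b * a := IsPGroup.commutative_of_card_eq_prime_sq h
  have hadd : ∀ a b : B, a + b = b + a :=
    fun a b => IsPGroup.commutative_of_card_eq_prime_sq (G := Multiplicative B) (p := p) h a b
  letI : AddCommGroup B := { (inferInstance : AddGroup B) with add_comm := hadd }
  have hlam_iff : ∀ a b : B, lambdaMap a b = b ↔ a * b = a + b := by
    intro a b; rw [lambdaMap, neg_add_eq_iff_eq_add]
  have h1 : ∀ a b : B, starOp a b = 0 ↔ lambdaMap a b = b := by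
    intro a b; rw [starOp, add_neg_eq_zero]; exact Iff.rfl
  have h2 : ∀ a b : B, lambdaMap b a = a ↔ lambdaMap a b = b := by
    intro a b; rw [hlam_iff, hlam_iff, hmul b a, hadd b a]
  have h3 : ∀ a b : B, addComB a b = 0 := by
    intro a b; rw [addComB, hadd a b]; simp [add_assoc]
  have hcond : ∀ x : B × B,
      (starOp x.1 x.2 = 0 ∧ starOp x.2 x.1 = 0 ∧ addComB x.1 x.2 = 0) ↔
        lambdaMap x.1 x.2 = x.2 := by
    rintro ⟨a, b⟩
    constructor
    · rintro ⟨u, -, -⟩; exact (h1 a b).mp u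
    · intro hu; exact ⟨(h1 a b).mpr hu, (h1 b a).mpr ((h2 a b).mpr hu), h3 a b⟩
  -- subgroups
  let Fix : B → AddSubgroup B := fun a =>
    { carrier := {b | lambdaMap a b = b}
      zero_mem' := lam_zero a
      add_mem' := fun hx hy => by
        simp only [Set.mem_setOf_eq] at *
        rw [lam_add, hx, hy]
      neg_mem' := fun hx => by
        simp only [Set.mem_setOf_eq] at *
        rw [lam_neg, hx] }
  have hFixmem : ∀ a b : B, b ∈ Fix a ↔ lambdaMap a b = b := fun a b => Iff.rfl
  let K : Subgroup B :=
    { carrier := {a | ∀ x, lambdaMap a x = x}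
      one_mem' := fun x => lam_one x
      mul_mem' := fun ha hb x => by
        simp only [Set.mem_setOf_eq] at *
        rw [lam_mul, hb x, ha x]
      inv_mem' := fun {a} ha x => by
        simp only [Set.mem_setOf_eq] at *
        conv_lhs => rw [← ha x]
        rw [← lam_mul, inv_mul_cancel, lam_one]
      }
  have hKmem : ∀ a : B, a ∈ K ↔ ∀ x, lambdaMap a x = x := fun a => Iff.rfl
  let F : AddSubgroup B :=
    { carrier := {x | ∀ b, lambdaMap b x = x}
      zero_mem' := fun b => lam_zero b
      add_mem' := fun hx hy b => by
        simp only [Set.mem_setOf_eq] at *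
        rw [lam_add, hx b, hy b]
      neg_mem' := fun hx b => by
        simp only [Set.mem_setOf_eq] at *
        rw [lam_neg, hx b] }
  have hFmem : ∀ x : B, x ∈ F ↔ ∀ b, lambdaMap b x = x := fun x => Iff.rfl
  -- p-group action: fixed points
  have hFP : MulAction.fixedPoints ↥(lamHom B).range B = (F : Set B) := by
    ext x
    simp only [MulAction.mem_fixedPoints, SetLike.mem_coe]
    constructor
    · intro hx b
      exact hx ⟨lamHom B b, ⟨b, rfl⟩⟩
    · rintro hx ⟨g, b, rfl⟩
      exact hx b
  have hGp : IsPGroup p ↥(lamHom B).range :=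
    (IsPGroup.of_card h).of_surjective (lamHom B).rangeRestrict
      (lamHom B).rangeRestrict_surjective
  have hmodF : Nat.card B ≡ Nat.card ↥F [MOD p] := by
    have hcm := hGp.card_modEq_card_fixedPoints B
    rwa [show Nat.card ↥(MulAction.fixedPoints ↥(lamHom B).range B) = Nat.card ↥F from
      Nat.card_congr (Equiv.setCongr hFP)] at hcm
  have hpF : p ∣ Nat.card ↥F := by
    have h0 : Nat.card B ≡ 0 [MOD p] :=
      (Nat.modEq_zero_iff_dvd).mpr (h ▸ dvd_pow_self p two_ne_zero)
    exact (Nat.modEq_zero_iff_dvd).mp (hmodF.symm.trans h0)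
  have hFdvd : Nat.card ↥F ∣ p ^ 2 := h ▸ AddSubgroup.card_addSubgroup_dvd_card F
  have hFcases : Nat.card ↥F = p ∨ Nat.card ↥F = p ^ 2 := by
    obtain ⟨i, hi2, hcF⟩ := (Nat.dvd_prime_pow hp).mp hFdvd
    interval_cases i
    · exfalso; rw [hcF, pow_zero] at hpF; exact hp.one_lt.ne' (Nat.dvd_one.mp hpF)
    · left; rw [hcF, pow_one]
    · right; exact hcF
  set N := Nat.card {x : B × B //
      starOp x.1 x.2 = 0 ∧ starOp x.2 x.1 = 0 ∧ addComB x.1 x.2 = 0} with hNdef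
  have hN1 : N = Nat.card {x : B × B // lambdaMap x.1 x.2 = x.2} :=
    Nat.card_congr (Equiv.subtypeEquivRight hcond)
  rcases hFcases with hcF | hcF
  · -- Case card F = p
    right
    have hFne : F ≠ ⊤ := by
      intro hFt
      rw [hFt, AddSubgroup.card_top, h] at hcF
      have := hp.two_le
      nlinarith
    obtain ⟨a₀, ha₀⟩ : ∃ a₀ : B, a₀ ∉ F := by
      by_contra hc; push_neg at hc
      exact hFne ((AddSubgroup.eq_top_iff' F).mpr hc)
    -- the key quotient argument
    have hcQ : Nat.card (B ⧸ F) = p := by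
      have hq := AddSubgroup.card_eq_card_quotient_mul_card_addSubgroup F
      rw [h, hcF] at hq
      have hq' : Nat.card (B ⧸ F) * p = p * p := by rw [← hq]; ring
      exact Nat.eq_of_mul_eq_mul_right hp.pos hq'
    set q : B ⧸ F := QuotientAddGroup.mk a₀ with hqdef
    have hq0 : q ≠ 0 := fun hq => ha₀ ((QuotientAddGroup.eq_zero_iff a₀).mp hq)
    have hordq : addOrderOf q = p := by
      have hdvd : addOrderOf q ∣ p := hcQ ▸ addOrderOf_dvd_natCard q
      rcases hp.eq_one_or_self_of_dvd _ hdvd with h1 | h1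
      · exact absurd (AddMonoid.addOrderOf_eq_one_iff.mp h1) hq0
      · exact h1
    have hcard_p_smul : ∀ y : B ⧸ F, (p : ℤ) • y = 0 := by
      intro y
      have : Nat.card (B ⧸ F) • y = 0 := card_nsmul_eq_zero'
      rw [hcQ] at this
      rw [natCast_zsmul]
      exact this
    have hmemF : ∀ b : B, -a₀ + lambdaMap b a₀ ∈ F := by
      intro b
      set φ := lamAddHom (a := b) with hφdef
      have hφ : ∀ x : B, φ x = lambdaMap b x := fun x => rfl
      have hcom : F ≤ F.comap φ := by
        intro f hf
        simp only [AddSubgroup.mem_comap]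
        have hfix : φ f = f := hf b
        rw [hfix]; exact hf
      set ebar : B ⧸ F →+ B ⧸ F := QuotientAddGroup.map F F φ hcom with hebar
      have hmap : ∀ x : B, ebar (QuotientAddGroup.mk x) = QuotientAddGroup.mk (φ x) :=
        fun x => rfl
      obtain ⟨m, hm⟩ : ∃ m : ℤ, m • q = ebar q := by
        have hmem : ebar q ∈ AddSubgroup.zmultiples q := by
          have hzt : AddSubgroup.zmultiples q = ⊤ :=
            AddSubgroup.eq_top_of_card_eq _ (by rw [Nat.card_zmultiples, hordq, hcQ])
          rw [hzt]; exact AddSubgroup.mem_top _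
        exact AddSubgroup.mem_zmultiples_iff.mp hmem
      have hiter : ∀ k : ℕ,
          (QuotientAddGroup.mk (lambdaMap (b ^ k) a₀) : B ⧸ F) = m ^ k • q := by
        intro k; induction k with
        | zero => rw [pow_zero, pow_zero, one_zsmul, lam_one]
        | succ k ih =>
            rw [pow_succ', lam_mul]
            calc (QuotientAddGroup.mk (lambdaMap b (lambdaMap (b ^ k) a₀)) : B ⧸ F)
                = ebar (QuotientAddGroup.mk (lambdaMap (b ^ k) a₀)) := (hmap _).symm
              _ = ebar (m ^ k • q) := by rw [ih]
              _ = m ^ k • ebar q := map_zsmul ebar _ _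
              _ = m ^ k • (m • q) := by rw [hm]
              _ = m ^ (k + 1) • q := by rw [smul_smul, ← pow_succ]
      have hbcard : b ^ (p ^ 2) = 1 := by rw [← h]; exact pow_card_eq_one'
      have hqq : m ^ (p ^ 2) • q = q := by
        have hit := hiter (p ^ 2)
        rw [hbcard, lam_one] at hit
        exact hit.symm
      have hdvd1 : (p : ℤ) ∣ m ^ (p ^ 2) - 1 := by
        have hz : (m ^ (p ^ 2) - 1) • q = 0 := by
          rw [sub_zsmul, one_zsmul, hqq]; simp
        have hd := addOrderOf_dvd_iff_zsmul_eq_zero.mpr hz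
        rwa [hordq] at hd
      have hm1 : (p : ℤ) ∣ m - 1 := by
        haveI : NeZero p := ⟨hp.pos.ne'⟩
        have hzz : ((m : ZMod p)) ^ (p ^ 2) = 1 := by
          have hc := (ZMod.intCast_zmod_eq_zero_iff_dvd _ p).mpr hdvd1
          push_cast at hc
          exact sub_eq_zero.mp hc
        have hone : (m : ZMod p) = 1 := by
          rwa [pow_two, pow_mul, ZMod.pow_card, ZMod.pow_card] at hzz
        rw [← ZMod.intCast_zmod_eq_zero_iff_dvd]
        push_cast
        rw [hone, sub_self]
      obtain ⟨t, ht⟩ := hm1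
      have hmq : m • q = q := by
        have h0 : (m - 1) • q = 0 := by
          rw [ht, mul_zsmul, hcard_p_smul]
        have h9 : m • q = (m - 1) • q + q := by rw [sub_zsmul, one_zsmul]; abel
        rw [h9, h0, zero_add]
      have hfin : (QuotientAddGroup.mk a₀ : B ⧸ F) = QuotientAddGroup.mk (lambdaMap b a₀) := by
        have h5 : (QuotientAddGroup.mk (lambdaMap b a₀) : B ⧸ F) = ebar q := (hmap a₀).symm
        rw [h5, ← hm, hmq]
      exact (QuotientAddGroup.eq (s := F)).mp hfin
    -- K is nontrivial
    have hKne : ∃ a : B, a ∈ K ∧ a ≠ 1 := by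
      by_contra hK'
      push_neg at hK'
      have htop : F ⊔ AddSubgroup.zmultiples a₀ = ⊤ := by
        set J := F ⊔ AddSubgroup.zmultiples a₀ with hJ
        have hFJ : F ≤ J := le_sup_left
        have ha₀J : a₀ ∈ J :=
          AddSubgroup.mem_sup_right (AddSubgroup.mem_zmultiples a₀)
        have hpJ : p ∣ Nat.card ↥J := hcF ▸ AddSubgroup.card_dvd_of_le hFJ
        have hJdvd : Nat.card ↥J ∣ p ^ 2 := h ▸ AddSubgroup.card_addSubgroup_dvd_card J
        obtain ⟨i, hi2, hcJ⟩ := (Nat.dvd_prime_pow hp).mp hJdvd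
        interval_cases i
        · exfalso; rw [hcJ, pow_zero] at hpJ; exact hp.one_lt.ne' (Nat.dvd_one.mp hpJ)
        · exfalso
          have hFJ' : F = J := AddSubgroup.eq_of_le_of_card_ge hFJ (by rw [hcJ, pow_one, hcF])
          exact ha₀ (hFJ' ▸ ha₀J)
        · exact AddSubgroup.eq_top_of_card_eq _ (by rw [hcJ, h])
      have hinj : Function.Injective (fun b : B => (⟨-a₀ + lambdaMap b a₀, hmemF b⟩ : ↥F)) := by
        intro b c hbc
        simp only [Subtype.mk_eq_mk] at hbc
        have hbc' : lambdaMap b a₀ = lambdaMap c a₀ := add_left_cancel hbc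
        have hK : c⁻¹ * b ∈ K := by
          rw [hKmem]
          intro x
          have hx : x ∈ F ⊔ AddSubgroup.zmultiples a₀ := by rw [htop]; exact AddSubgroup.mem_top _
          obtain ⟨f, hf, g, hg, rfl⟩ := AddSubgroup.mem_sup.mp hx
          obtain ⟨n, rfl⟩ := AddSubgroup.mem_zmultiples_iff.mp hg
          have hfa : lambdaMap (c⁻¹ * b) a₀ = a₀ := by
            rw [lam_mul, hbc', ← lam_mul, inv_mul_cancel, lam_one]
          have : lambdaMap (c⁻¹ * b) (f + n • a₀)
              = lambdaMap (c⁻¹ * b) f + n • lambdaMap (c⁻¹ * b) a₀ := by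
            rw [lam_add]
            congr 1
            exact map_zsmul (lamAddHom (c⁻¹ * b)) n a₀
          rw [this, hfa, hf (c⁻¹ * b)]
        have := hK' _ hK
        rw [inv_mul_eq_one] at this
        exact this.symm
      have hle : Nat.card B ≤ Nat.card ↥F := Nat.card_le_card_of_injective _ hinj
      rw [h, hcF] at hle
      have := hp.two_le
      nlinarith
    obtain ⟨a₁, ha₁K, ha₁⟩ := hKne
    -- b₀ outside K
    obtain ⟨b₀, hb₀⟩ : ∃ b₀ : B, b₀ ∉ K := by
      have := ha₀
      rw [hFmem] at this
      push_neg at this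
      obtain ⟨b₀, hb₀⟩ := this
      exact ⟨b₀, fun hb => hb₀ (hb a₀)⟩
    have hKcard : Nat.card ↥K = p := by
      have hKdvd : Nat.card ↥K ∣ p ^ 2 := h ▸ Subgroup.card_subgroup_dvd_card K
      obtain ⟨i, hi2, hcK⟩ := (Nat.dvd_prime_pow hp).mp hKdvd
      interval_cases i
      · exfalso
        rw [pow_zero, Subgroup.card_eq_one] at hcK
        rw [hcK] at ha₁K
        exact ha₁ ha₁K
      · rw [hcK, pow_one]
      · exfalso
        have : K = ⊤ := Subgroup.eq_top_of_card_eq _ (by rw [hcK, h])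
        rw [this] at hb₀
        exact hb₀ (Subgroup.mem_top _)
    -- Fix cardinalities
    have hFixcard : ∀ a : B, Nat.card ↥(Fix a) = if a ∈ K then p ^ 2 else p := by
      intro a
      by_cases haK : a ∈ K
      · rw [if_pos haK]
        have : Fix a = ⊤ := by
          rw [AddSubgroup.eq_top_iff']
          intro x
          exact haK x
        rw [this, AddSubgroup.card_top, h]
      · rw [if_neg haK]
        have hFle : F ≤ Fix a := fun x hx => hx a
        have hpFix : p ∣ Nat.card ↥(Fix a) := hcF ▸ AddSubgroup.card_dvd_of_le hFle
        have hFixdvd : Nat.card ↥(Fix a) ∣ p ^ 2 := h ▸ AddSubgroup.card_addSubgroup_dvd_card _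
        obtain ⟨i, hi2, hcFix⟩ := (Nat.dvd_prime_pow hp).mp hFixdvd
        interval_cases i
        · exfalso; rw [hcFix, pow_zero] at hpFix; exact hp.one_lt.ne' (Nat.dvd_one.mp hpFix)
        · rw [hcFix, pow_one]
        · exfalso
          have htop2 : Fix a = ⊤ := AddSubgroup.eq_top_of_card_eq _ (by rw [hcFix, h])
          apply haK
          rw [hKmem]
          intro x
          have : x ∈ Fix a := by rw [htop2]; exact AddSubgroup.mem_top _
          exact this
    -- sum over a
    have hN2 : N = ∑ a : B, Nat.card ↥(Fix a) := by
      rw [hN1,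
        Nat.card_congr (Equiv.subtypeProdEquivSigmaSubtype fun (a b : B) => lambdaMap a b = b),
        Nat.card_eq_fintype_card, Fintype.card_sigma]
      refine Finset.sum_congr rfl fun a _ => ?_
      rw [Nat.card_eq_fintype_card]
      exact Fintype.card_congr (Equiv.subtypeEquivRight fun b => Iff.rfl)
    have hKfilt : (Finset.univ.filter (fun a : B => a ∈ K)).card = p := by
      rw [← hKcard, Nat.card_eq_fintype_card, Fintype.card_subtype]
    rw [hN2]
    have hBcard : (Finset.univ : Finset B).card = p ^ 2 := by
      rw [Finset.card_univ, ← Nat.card_eq_fintype_card, h]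
    calc ∑ a : B, Nat.card ↥(Fix a) = ∑ a : B, if a ∈ K then p ^ 2 else p :=
        Finset.sum_congr rfl fun a _ => hFixcard a
      _ = p * p ^ 2 + (p ^ 2 - p) * p := by
        rw [Finset.sum_ite, Finset.sum_const, Finset.sum_const, smul_eq_mul, smul_eq_mul, hKfilt]
        have hsum := Finset.card_filter_add_card_filter_not
          (s := (Finset.univ : Finset B)) (p := fun a : B => a ∈ K)
        rw [hBcard, hKfilt] at hsum
        have hfneg : (Finset.univ.filter (fun a : B => ¬ a ∈ K)).card = p ^ 2 - p := by omega
        rw [hfneg]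
  · -- Case card F = p ^ 2 : everything commutes
    left
    have hFtop : F = ⊤ := AddSubgroup.eq_top_of_card_eq F (by rw [hcF, h])
    have hall : ∀ x : B × B, lambdaMap x.1 x.2 = x.2 := by
      intro x
      have hx : x.2 ∈ F := by rw [hFtop]; exact AddSubgroup.mem_top _
      exact hx x.1
    rw [hN1, Nat.card_congr (Equiv.subtypeUnivEquiv hall), Nat.card_prod, h]

theorem skewBracePbAux {B : Type*} [AddGroup B] [Group B] [SkewBrace B] [Finite B]
    (p : ℕ) (hp : p.Prime) (h : Nat.card B = p ^ 2) :
    (Nat.card {x : B × B //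
      starOp x.1 x.2 = 0 ∧ starOp x.2 x.1 = 0 ∧ addComB x.1 x.2 = 0} : ℚ)
      / (Nat.card B : ℚ) ^ 2 = 1 ∨
    (Nat.card {x : B × B //
      starOp x.1 x.2 = 0 ∧ starOp x.2 x.1 = 0 ∧ addComB x.1 x.2 = 0} : ℚ)
      / (Nat.card B : ℚ) ^ 2 = (2 * (p : ℚ) - 1) / (p : ℚ) ^ 2 := by
  have hp0 : (p : ℚ) ≠ 0 := Nat.cast_ne_zero.mpr hp.pos.ne'
  rcases skewBraceCountAux p hp h with hN | hN
  · left
    rw [hN, h]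
    push_cast
    field_simp
  · right
    rw [hN, h]
    have hple : p ≤ p ^ 2 := Nat.le_self_pow two_ne_zero p
    push_cast [Nat.cast_sub hple]
    field_simp
    ring

/-- For a skew brace of order `p²`, `Pb(B) = 1` or `Pb(B) = (2p-1)/p²`. -/
theorem stmt17 {B : Type*} [AddGroup B] [Group B] [SkewBrace B] [Finite B]
    (p : ℕ) (hp : p.Prime) (h : Nat.card B = p ^ 2) :
    Pb B = 1 ∨ Pb B = (2 * (p : ℚ) - 1) / (p : ℚ) ^ 2 := by
  unfold Pb
  exact skewBracePbAux p hp h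
end

section
/- Let A and B be finite skew left braces that are isoclinic. Then Pb(A) = Pb(B). -/
section Aux

set_option linter.unusedSectionVars false

variable {B : Type*} [AddGroup B] [Group B]

theorem neg_central_aux {z : B} (h : ∀ b, z + b = b + z) (b : B) : -z + b = b + -z := by
  have h2 := congrArg (fun x => -x) (h (-b))
  simpa [neg_add_rev] using h2.symm

variable [SkewBrace B]

theorem mul_ann {z : B} (hz : z ∈ AnnSet B) (a : B) : a * z = a + z := by
  rw [← hz.2.2 a, ← hz.1 a, hz.2.1 a]

theorem star_left {z : B} (hz : z ∈ AnnSet B) (a b : B) :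
    starOp (a + z) b = starOp a b := by
  have h1 : (a + z) * b = z + a * b := by
    rw [← mul_ann hz a, mul_assoc, ← hz.1 b, SkewBrace.compat, mul_ann hz a,
      add_assoc a z, hz.2.1 (-a), ← add_assoc a (-a), add_neg_cancel, zero_add]
  rw [starOp, h1, starOp, neg_add_rev, neg_central_aux hz.2.1 (-a),
    add_assoc (-a) (-z), neg_add_cancel_left]

theorem star_right {z : B} (hz : z ∈ AnnSet B) (a b : B) :
    starOp a (b + z) = starOp a b := by
  have h1 : a * (b + z) = a * b + z := by
    rw [SkewBrace.compat, mul_ann hz, add_assoc (a * b) (-a), neg_add_cancel_left]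
  rw [starOp, h1, starOp, neg_add_rev, ← add_assoc (-a) (a * b) z,
    add_assoc (-a + a * b) z, add_neg_cancel_left]

theorem addCom_left {z : B} (hz : z ∈ AnnSet B) (a b : B) :
    addComB (a + z) b = addComB a b := by
  rw [addComB, addComB, neg_add_rev, add_assoc a z b, hz.2.1 b, ← add_assoc a b z,
    add_assoc (a + b) z, add_neg_cancel_left]

theorem addCom_right {z : B} (hz : z ∈ AnnSet B) (a b : B) :
    addComB a (b + z) = addComB a b := by
  rw [addComB, addComB, neg_add_rev, ← add_assoc a b z, add_assoc (a + b) z (-a),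
    hz.2.1 (-a), ← add_assoc (a + b) (-a) z, add_assoc (a + b + -a) z,
    add_neg_cancel_left]

/-- The commuting condition. -/
def CondP (a b : B) : Prop := starOp a b = 0 ∧ starOp b a = 0 ∧ addComB a b = 0

theorem cond_add {z w : B} (hz : z ∈ AnnSet B) (hw : w ∈ AnnSet B) (a b : B) :
    CondP (a + z) (b + w) ↔ CondP a b := by
  unfold CondP
  rw [star_left hz, star_right hw, star_left hw, star_right hz, addCom_left hz,
    addCom_right hw]

theorem cond_congr {a a' b b' : B} (ha : -a + a' ∈ AnnSet B) (hb : -b + b' ∈ AnnSet B) :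
    CondP a' b' ↔ CondP a b := by
  have h1 := cond_add ha hb a b
  rwa [add_neg_cancel_left, add_neg_cancel_left] at h1

/-- The annihilator as an additive subgroup. -/
def AnnAdd (B : Type*) [AddGroup B] [Group B] [SkewBrace B] : AddSubgroup B where
  carrier := AnnSet B
  zero_mem' := by
    refine ⟨fun b => ?_, fun b => by rw [zero_add, add_zero], fun b => ?_⟩
    · rw [zero_add, SkewBrace.zero_eq_one, one_mul]
    · rw [SkewBrace.zero_eq_one, one_mul, mul_one]
  add_mem' := by
    intro z w hz hw
    refine ⟨fun b => ?_, fun b => ?_, fun b => ?_⟩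
    · rw [add_assoc, hw.1 b, hz.1 (w * b), ← mul_assoc, ← hz.1 w]
    · rw [add_assoc, hw.2.1 b, ← add_assoc, hz.2.1 b, add_assoc]
    · rw [hz.1 w, mul_assoc, hw.2.2 b, ← mul_assoc, hz.2.2 b, mul_assoc]
  neg_mem' := by
    intro z hz
    have hinv : -z = z⁻¹ := by
      have h := hz.1 (-z)
      rw [add_neg_cancel, SkewBrace.zero_eq_one] at h
      exact eq_inv_of_mul_eq_one_right h.symm
    have key : ∀ b : B, z⁻¹ * b = -z + b := by
      intro b
      have h := hz.1 (z⁻¹ * b)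
      rw [mul_inv_cancel_left] at h
      exact eq_neg_add_of_add_eq h
    refine ⟨fun b => ?_, fun b => neg_central_aux hz.2.1 b, fun b => ?_⟩
    · rw [← key b, hinv]
    · rw [hinv]
      exact (Commute.inv_left (hz.2.2 b)).eq

theorem ann_mul_iff_add (a a' : B) : a⁻¹ * a' ∈ AnnSet B ↔ -a + a' ∈ AnnSet B := by
  constructor
  · intro hz
    have h2 := mul_ann hz a
    rw [mul_inv_cancel_left] at h2
    have h3 : -a + a' = a⁻¹ * a' := by
      conv_lhs => rw [h2]
      rw [neg_add_cancel_left]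
    rw [h3]; exact hz
  · intro hw
    have h3 : a * (-a + a') = a' := (mul_ann hw a).trans (add_neg_cancel_left a a')
    have h4 : a⁻¹ * a' = -a + a' := by
      conv_lhs => rw [← h3, inv_mul_cancel_left]
    rw [h4]; exact hw

end Aux

section Count

set_option linter.unusedSectionVars false

variable {B : Type*} [AddGroup B] [Group B] [SkewBrace B]

theorem mem_ann_of_mk_eq {a b : B}
    (h : (QuotientAddGroup.mk a : B ⧸ AnnAdd B) = QuotientAddGroup.mk b) :
    -a + b ∈ AnnSet B := QuotientAddGroup.eq.mp h

theorem out_mem_ann (b : B) :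
    -((QuotientAddGroup.mk b : B ⧸ AnnAdd B).out) + b ∈ AnnSet B :=
  mem_ann_of_mk_eq (QuotientAddGroup.out_eq' (QuotientAddGroup.mk b))

theorem mk_out_add {q : B ⧸ AnnAdd B} {z : B} (hz : z ∈ AnnSet B) :
    (QuotientAddGroup.mk (q.out + z) : B ⧸ AnnAdd B) = q := by
  refine (QuotientAddGroup.eq.mpr ?_).trans (QuotientAddGroup.out_eq' q)
  show -(q.out + z) + q.out ∈ AnnSet B
  rw [neg_add_rev, add_assoc, neg_add_cancel, add_zero]
  exact (AnnAdd B).neg_mem hz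

/-- The decomposition of commuting pairs into coset data. -/
noncomputable def countEquiv (B : Type*) [AddGroup B] [Group B] [SkewBrace B] :
    {p : B × B // CondP p.1 p.2} ≃
      {q : (B ⧸ AnnAdd B) × (B ⧸ AnnAdd B) // CondP q.1.out q.2.out} ×
        ((AnnAdd B) × (AnnAdd B)) where
  toFun p :=
    ⟨⟨(QuotientAddGroup.mk p.1.1, QuotientAddGroup.mk p.1.2),
        (cond_congr (out_mem_ann p.1.1) (out_mem_ann p.1.2)).mp p.2⟩,
      ⟨-((QuotientAddGroup.mk p.1.1 : B ⧸ AnnAdd B).out) + p.1.1, out_mem_ann p.1.1⟩,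
      ⟨-((QuotientAddGroup.mk p.1.2 : B ⧸ AnnAdd B).out) + p.1.2, out_mem_ann p.1.2⟩⟩
  invFun x :=
    ⟨(x.1.1.1.out + x.2.1.1, x.1.1.2.out + x.2.2.1),
      (cond_add x.2.1.2 x.2.2.2 _ _).mpr x.1.2⟩
  left_inv := by
    rintro ⟨⟨p1, p2⟩, hp⟩
    refine Subtype.ext (Prod.ext ?_ ?_)
    · show (QuotientAddGroup.mk p1 : B ⧸ AnnAdd B).out +
        (-((QuotientAddGroup.mk p1 : B ⧸ AnnAdd B).out) + p1) = p1
      exact add_neg_cancel_left _ _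
    · show (QuotientAddGroup.mk p2 : B ⧸ AnnAdd B).out +
        (-((QuotientAddGroup.mk p2 : B ⧸ AnnAdd B).out) + p2) = p2
      exact add_neg_cancel_left _ _
  right_inv := by
    rintro ⟨⟨⟨q1, q2⟩, hq⟩, ⟨z, hz⟩, ⟨w, hw⟩⟩
    have e1 : (QuotientAddGroup.mk (q1.out + z) : B ⧸ AnnAdd B) = q1 := mk_out_add hz
    have e2 : (QuotientAddGroup.mk (q2.out + w) : B ⧸ AnnAdd B) = q2 := mk_out_add hw
    refine Prod.ext (Subtype.ext (Prod.ext e1 e2)) (Prod.ext (Subtype.ext ?_) (Subtype.ext ?_))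
    · show -((QuotientAddGroup.mk (q1.out + z) : B ⧸ AnnAdd B).out) + (q1.out + z) = z
      rw [e1, neg_add_cancel_left]
    · show -((QuotientAddGroup.mk (q2.out + w) : B ⧸ AnnAdd B).out) + (q2.out + w) = w
      rw [e2, neg_add_cancel_left]

theorem pb_formula (B : Type*) [AddGroup B] [Group B] [SkewBrace B] [Finite B] :
    Pb B = (Nat.card {q : (B ⧸ AnnAdd B) × (B ⧸ AnnAdd B) // CondP q.1.out q.2.out} : ℚ) /
      (Nat.card (B ⧸ AnnAdd B) : ℚ) ^ 2 := by
  have hT : Nat.card {p : B × B // CondP p.1 p.2} =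
      Nat.card {q : (B ⧸ AnnAdd B) × (B ⧸ AnnAdd B) // CondP q.1.out q.2.out} *
        (Nat.card (AnnAdd B)) ^ 2 := by
    rw [Nat.card_congr (countEquiv B), Nat.card_prod, Nat.card_prod, sq]
  have hB : Nat.card B = Nat.card (B ⧸ AnnAdd B) * Nat.card (AnnAdd B) :=
    AddSubgroup.card_eq_card_quotient_mul_card_addSubgroup _
  have hann : (Nat.card (AnnAdd B) : ℚ) ≠ 0 := by
    have : 0 < Nat.card (AnnAdd B) := Nat.card_pos
    exact_mod_cast this.ne'
  have hq : (Nat.card (B ⧸ AnnAdd B) : ℚ) ≠ 0 := by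
    have : 0 < Nat.card (B ⧸ AnnAdd B) := Nat.card_pos
    exact_mod_cast this.ne'
  show (Nat.card {p : B × B // CondP p.1 p.2} : ℚ) / (Nat.card B : ℚ) ^ 2 = _
  rw [hT, hB]
  push_cast
  field_simp

end Count
/-- `Γ₂(B) = ⟨B*B, [B,B]⁺⟩⁺`, the second term of the lower central series of a
skew brace. -/
def Gamma2SB (B : Type*) [AddGroup B] [Group B] : AddSubgroup B :=
  AddSubgroup.closure
    {x : B | (∃ a b : B, x = starOp a b) ∨ (∃ a b : B, x = addComB a b)}

/-- Isoclinism of skew braces: a brace isomorphism `ξ` between the quotients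
mod the annihilators (encoded on representatives: `ξ` sends the coset of `a`
to the coset of `ξ a`, bijectively and respecting both operations) together
with a brace isomorphism `θ : Γ₂(A) → Γ₂(B)` making the usual diagrams for
`[·,·]⁺` and `*` commute. -/
def IsoclinicSB (A B : Type*) [AddGroup A] [Group A] [AddGroup B] [Group B] : Prop :=
  ∃ (ξ : A → B) (θ : A → B),
    (∀ a a' : A, a⁻¹ * a' ∈ AnnSet A ↔ (ξ a)⁻¹ * ξ a' ∈ AnnSet B) ∧
    (∀ b : B, ∃ a : A, (ξ a)⁻¹ * b ∈ AnnSet B) ∧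
    (∀ a a' : A, (ξ a * ξ a')⁻¹ * ξ (a * a') ∈ AnnSet B) ∧
    (∀ a a' : A, -(ξ a + ξ a') + ξ (a + a') ∈ AnnSet B) ∧
    (∀ x ∈ Gamma2SB A, θ x ∈ Gamma2SB B) ∧
    Set.InjOn θ (Gamma2SB A) ∧
    (∀ y ∈ Gamma2SB B, ∃ x ∈ Gamma2SB A, θ x = y) ∧
    (∀ x ∈ Gamma2SB A, ∀ y ∈ Gamma2SB A, θ (x + y) = θ x + θ y) ∧
    (∀ x ∈ Gamma2SB A, ∀ y ∈ Gamma2SB A, θ (x * y) = θ x * θ y) ∧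
    (∀ a a' : A, θ (addComB a a') = addComB (ξ a) (ξ a')) ∧
    (∀ a a' : A, θ (starOp a a') = starOp (ξ a) (ξ a'))


/-- Isoclinic finite skew braces have equal commuting probability. -/
theorem stmt18 {A B : Type*} [AddGroup A] [Group A] [SkewBrace A]
    [AddGroup B] [Group B] [SkewBrace B] [Finite A] [Finite B]
    (h : IsoclinicSB A B) :
    Pb A = Pb B := by
  obtain ⟨ξ, θ, hξann, hξsurj, hξmul, hξadd, hθmem, hθinj, hθsurj, hθadd, hθmul,
    hθcom, hθstar⟩ := h
  -- θ sends 0 to 0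
  have h0A : (0 : A) ∈ Gamma2SB A := (Gamma2SB A).zero_mem
  have hθ0 : θ 0 = 0 := by
    have h1 := hθadd 0 h0A 0 h0A
    rw [add_zero] at h1
    exact (left_eq_add.mp h1)
  have star_mem : ∀ a b : A, starOp a b ∈ Gamma2SB A := fun a b =>
    AddSubgroup.subset_closure (Or.inl ⟨a, b, rfl⟩)
  have addc_mem : ∀ a b : A, addComB a b ∈ Gamma2SB A := fun a b =>
    AddSubgroup.subset_closure (Or.inr ⟨a, b, rfl⟩)
  have star_iff : ∀ a b : A, (starOp a b = 0 ↔ starOp (ξ a) (ξ b) = 0) := by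
    intro a b
    constructor
    · intro hz
      have h1 := hθstar a b
      rw [hz, hθ0] at h1
      exact h1.symm
    · intro hz
      have h2 : θ (starOp a b) = θ 0 := by rw [hθstar, hz, hθ0]
      exact hθinj (star_mem a b) h0A h2
  have addc_iff : ∀ a b : A, (addComB a b = 0 ↔ addComB (ξ a) (ξ b) = 0) := by
    intro a b
    constructor
    · intro hz
      have h1 := hθcom a b
      rw [hz, hθ0] at h1
      exact h1.symm
    · intro hz
      have h2 : θ (addComB a b) = θ 0 := by rw [hθcom, hz, hθ0]
      exact hθinj (addc_mem a b) h0A h2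
  have cond_iff : ∀ a b : A, (CondP a b ↔ CondP (ξ a) (ξ b)) := fun a b =>
    and_congr (star_iff a b) (and_congr (star_iff b a) (addc_iff a b))
  -- ξ descends to a bijection between the quotients
  have mkiff : ∀ a a' : A, ((QuotientAddGroup.mk a : A ⧸ AnnAdd A) = QuotientAddGroup.mk a') ↔
      ((QuotientAddGroup.mk (ξ a) : B ⧸ AnnAdd B) = QuotientAddGroup.mk (ξ a')) := by
    intro a a'
    calc (QuotientAddGroup.mk a : A ⧸ AnnAdd A) = QuotientAddGroup.mk a'
        ↔ -a + a' ∈ AnnAdd A := QuotientAddGroup.eq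
      _ ↔ -a + a' ∈ AnnSet A := Iff.rfl
      _ ↔ a⁻¹ * a' ∈ AnnSet A := (ann_mul_iff_add a a').symm
      _ ↔ (ξ a)⁻¹ * ξ a' ∈ AnnSet B := hξann a a'
      _ ↔ -(ξ a) + ξ a' ∈ AnnSet B := ann_mul_iff_add _ _
      _ ↔ -(ξ a) + ξ a' ∈ AnnAdd B := Iff.rfl
      _ ↔ _ := QuotientAddGroup.eq.symm
  set ξbar : (A ⧸ AnnAdd A) → (B ⧸ AnnAdd B) :=
    fun q => QuotientAddGroup.mk (ξ q.out) with hξbar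
  have hbar_mk : ∀ a : A, ξbar (QuotientAddGroup.mk a) = QuotientAddGroup.mk (ξ a) :=
    fun a => (mkiff _ _).mp (QuotientAddGroup.out_eq' (QuotientAddGroup.mk a))
  have hbar_bij : Function.Bijective ξbar := by
    constructor
    · intro q q' hqq
      have h1 := (mkiff q.out q'.out).mpr hqq
      rwa [QuotientAddGroup.out_eq', QuotientAddGroup.out_eq'] at h1
    · intro qb
      obtain ⟨a, ha⟩ := hξsurj qb.out
      refine ⟨QuotientAddGroup.mk a, ?_⟩
      rw [hbar_mk]
      have h1 : -(ξ a) + qb.out ∈ AnnSet B := (ann_mul_iff_add _ _).mp ha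
      exact (QuotientAddGroup.eq.mpr h1).trans (QuotientAddGroup.out_eq' qb)
  set e : (A ⧸ AnnAdd A) ≃ (B ⧸ AnnAdd B) := Equiv.ofBijective ξbar hbar_bij with he
  have he_apply : ∀ q, e q = ξbar q := fun _ => rfl
  -- the condition is compatible with ξbar
  have condQ_iff : ∀ q1 q2 : A ⧸ AnnAdd A,
      (CondP q1.out q2.out ↔ CondP (ξbar q1).out (ξbar q2).out) := by
    intro q1 q2
    have m1 : -(ξ q1.out) + (ξbar q1).out ∈ AnnSet B :=
      QuotientAddGroup.eq.mp ((QuotientAddGroup.out_eq' (ξbar q1)).symm :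
        ξbar q1 = QuotientAddGroup.mk (ξbar q1).out)
    have m2 : -(ξ q2.out) + (ξbar q2).out ∈ AnnSet B :=
      QuotientAddGroup.eq.mp ((QuotientAddGroup.out_eq' (ξbar q2)).symm :
        ξbar q2 = QuotientAddGroup.mk (ξbar q2).out)
    exact (cond_iff q1.out q2.out).trans (cond_congr m1 m2).symm
  have eS : {q : (A ⧸ AnnAdd A) × (A ⧸ AnnAdd A) // CondP q.1.out q.2.out} ≃
      {q : (B ⧸ AnnAdd B) × (B ⧸ AnnAdd B) // CondP q.1.out q.2.out} := by
    refine Equiv.subtypeEquiv (e.prodCongr e) fun q => ?_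
    simpa [Equiv.prodCongr_apply, he_apply] using condQ_iff q.1 q.2
  have hS : Nat.card {q : (A ⧸ AnnAdd A) × (A ⧸ AnnAdd A) // CondP q.1.out q.2.out} =
      Nat.card {q : (B ⧸ AnnAdd B) × (B ⧸ AnnAdd B) // CondP q.1.out q.2.out} :=
    Nat.card_congr eS
  have hQ : Nat.card (A ⧸ AnnAdd A) = Nat.card (B ⧸ AnnAdd B) := Nat.card_congr e
  rw [pb_formula A, pb_formula B, hS, hQ]
end

section
/- Let B = ℤ/nℤ with + the usual addition and x ∘ y := x + y + dxy, where d is an integer such that every prime divisor p of n satisfies p ∣ d and d ∣ n. Then (B, +, ∘) is a skew left brace (indeed a brace) and for each x ∈ B, |Cb_B(x)| = gcd(dx mod n, n); consequently Pb(B) = (1/n²) Σ_{x=0}^{n-1} gcd(dx, n). -/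
lemma card_ker_mul (n : ℕ) [NeZero n] (c : ZMod n) :
    Nat.card {y : ZMod n // c * y = 0} = Nat.gcd c.val n := by
  set f : ZMod n →+ ZMod n := AddMonoidHom.mulLeft c with hf
  have hker : Nat.card {y : ZMod n // c * y = 0} = Nat.card f.ker :=
    Nat.card_congr (Equiv.subtypeEquivRight (fun y => by simp [hf, AddMonoidHom.mem_ker]))
  have hcv : ((c.val : ℕ) : ZMod n) = c := ZMod.natCast_rightInverse c
  have hrange : f.range = AddSubgroup.zmultiples c := by
    ext z
    simp only [AddMonoidHom.mem_range, AddSubgroup.mem_zmultiples_iff, hf,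
      AddMonoidHom.coe_mulLeft]
    constructor
    · rintro ⟨y, rfl⟩
      have hy : ((y.val : ℤ) : ZMod n) = y := by
        rw [Int.cast_natCast]; exact ZMod.natCast_rightInverse y
      exact ⟨(y.val : ℤ), by rw [zsmul_eq_mul, hy, mul_comm]⟩
    · rintro ⟨k, rfl⟩
      exact ⟨(k : ZMod n), by rw [zsmul_eq_mul]; ring⟩
  have hcardrange : Nat.card f.range = n / Nat.gcd n c.val := by
    rw [hrange, Nat.card_zmultiples]
    conv_lhs => rw [← hcv]
    rw [ZMod.addOrderOf_coe _ (NeZero.ne n)]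
  have hlag : Nat.card (ZMod n) = Nat.card (ZMod n ⧸ f.ker) * Nat.card f.ker :=
    AddSubgroup.card_eq_card_quotient_mul_card_addSubgroup f.ker
  have hquot : Nat.card (ZMod n ⧸ f.ker) = Nat.card f.range :=
    Nat.card_congr (QuotientAddGroup.quotientKerEquivRange f).toEquiv
  have hn : Nat.card (ZMod n) = n := Nat.card_zmod n
  have hg : Nat.gcd n c.val ∣ n := Nat.gcd_dvd_left n c.val
  have hnpos : 0 < n := Nat.pos_of_ne_zero (NeZero.ne n)
  have hgpos : 0 < Nat.gcd n c.val := Nat.gcd_pos_of_pos_left _ hnpos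
  rw [hker]
  have key := hlag
  rw [hquot, hcardrange, hn] at key
  have hq : 0 < n / Nat.gcd n c.val := Nat.div_pos (Nat.le_of_dvd hnpos hg) hgpos
  have h2 : n / (n / Nat.gcd n c.val) = Nat.gcd n c.val := Nat.div_div_self hg (NeZero.ne n)
  have h3 : Nat.card f.ker = n / (n / Nat.gcd n c.val) :=
    (Nat.div_eq_of_eq_mul_right hq key).symm
  rw [h3, h2, Nat.gcd_comm]

/-- On `ℤ/nℤ` with `x ∘ y = x + y + dxy` where `p ∣ d ∣ n` for every prime
`p ∣ n`: this is a brace, `|Cb_B(x)| = gcd(dx, n)`, and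
`Pb(B) = (1/n²) Σ_x gcd(dx, n)`. -/
theorem stmt19 (n : ℕ) [NeZero n] (d : ℕ)
    (hpd : ∀ p : ℕ, p.Prime → p ∣ n → p ∣ d) (hdn : d ∣ n) :
    let circ : ZMod n → ZMod n → ZMod n := fun x y => x + y + (d : ZMod n) * x * y
    (∀ x y z : ZMod n, circ (circ x y) z = circ x (circ y z)) ∧
    (∀ x : ZMod n, circ 0 x = x ∧ circ x 0 = x) ∧
    (∀ x : ZMod n, ∃ y : ZMod n, circ x y = 0 ∧ circ y x = 0) ∧
    (∀ a b c : ZMod n, circ a (b + c) = circ a b - a + circ a c) ∧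
    (∀ x : ZMod n,
      Nat.card {y : ZMod n // -x + circ x y - y = 0 ∧ -y + circ y x - x = 0 ∧
          x + y - x - y = 0}
        = Nat.gcd (((d : ZMod n) * x).val) n) ∧
    ((Nat.card {p : ZMod n × ZMod n //
        -p.1 + circ p.1 p.2 - p.2 = 0 ∧ -p.2 + circ p.2 p.1 - p.1 = 0 ∧
        p.1 + p.2 - p.1 - p.2 = 0} : ℚ) / (n : ℚ) ^ 2
      = (1 / (n : ℚ) ^ 2) *
          ∑ x : ZMod n, (Nat.gcd (((d : ZMod n) * x).val) n : ℚ)) := by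
  intro circ
  have hcirc : ∀ x y : ZMod n, circ x y = x + y + (d : ZMod n) * x * y := fun _ _ => rfl
  have hcard5 : ∀ x : ZMod n,
      Nat.card {y : ZMod n // -x + circ x y - y = 0 ∧ -y + circ y x - x = 0 ∧
          x + y - x - y = 0} = Nat.gcd (((d : ZMod n) * x).val) n := by
    intro x
    rw [← card_ker_mul n ((d : ZMod n) * x)]
    apply Nat.card_congr
    apply Equiv.subtypeEquivRight
    intro y
    simp only [hcirc]
    constructor
    · rintro ⟨h1, -, -⟩; linear_combination h1
    · intro h; exact ⟨by linear_combination h, by linear_combination h, by ring⟩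
  refine ⟨?_, ?_, ?_, ?_, hcard5, ?_⟩
  · intro x y z; simp only [hcirc]; ring
  · intro x; constructor <;> (simp only [hcirc]; ring)
  · intro x
    have hu : IsUnit ((1 + d * x.val : ℕ) : ZMod n) := by
      rw [ZMod.isUnit_iff_coprime]
      rw [Nat.coprime_comm]
      by_contra h
      obtain ⟨p, hp, hpg⟩ := Nat.exists_prime_and_dvd h
      have hpn : p ∣ n := hpg.trans (Nat.gcd_dvd_left _ _)
      have hpa : p ∣ 1 + d * x.val := hpg.trans (Nat.gcd_dvd_right _ _)
      have hpd' : p ∣ d * x.val := (hpd p hp hpn).mul_right _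
      have : p ∣ 1 := (Nat.dvd_add_right hpd').mp (by rwa [Nat.add_comm] at hpa)
      exact hp.one_lt.ne' (Nat.dvd_one.mp this)
    obtain ⟨u, hu⟩ := hu
    have hux : (u : ZMod n) = 1 + (d : ZMod n) * x := by
      rw [hu]
      push_cast
      rw [ZMod.natCast_val, ZMod.cast_id]
    refine ⟨-x * ↑u⁻¹, ?_, ?_⟩ <;> simp only [hcirc]
    · have : x + (-x * ↑u⁻¹) + (d : ZMod n) * x * (-x * ↑u⁻¹)
          = x + (-x * ↑u⁻¹) * (1 + (d : ZMod n) * x) := by ring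
      rw [this, ← hux]
      have : (-x * (↑u⁻¹ : ZMod n)) * ↑u = -x * (↑u⁻¹ * ↑u : ZMod n) := by ring
      rw [this, ← Units.val_mul, inv_mul_cancel, Units.val_one, mul_one, add_neg_cancel]
    · have : (-x * ↑u⁻¹) + x + (d : ZMod n) * (-x * ↑u⁻¹) * x
          = x + (-x * ↑u⁻¹) * (1 + (d : ZMod n) * x) := by ring
      rw [this, ← hux]
      have : (-x * (↑u⁻¹ : ZMod n)) * ↑u = -x * (↑u⁻¹ * ↑u : ZMod n) := by ring
      rw [this, ← Units.val_mul, inv_mul_cancel, Units.val_one, mul_one, add_neg_cancel]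
  · intro a b c; simp only [hcirc]; ring
  · have e : {p : ZMod n × ZMod n //
        -p.1 + circ p.1 p.2 - p.2 = 0 ∧ -p.2 + circ p.2 p.1 - p.1 = 0 ∧
        p.1 + p.2 - p.1 - p.2 = 0}
        ≃ Σ x : ZMod n, {y : ZMod n // -x + circ x y - y = 0 ∧ -y + circ y x - x = 0 ∧
          x + y - x - y = 0} :=
      Equiv.subtypeProdEquivSigmaSubtype (fun x y : ZMod n =>
        -x + circ x y - y = 0 ∧ -y + circ y x - x = 0 ∧ x + y - x - y = 0)
    rw [Nat.card_congr e]
    have : Nat.card (Σ x : ZMod n, {y : ZMod n // -x + circ x y - y = 0 ∧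
        -y + circ y x - x = 0 ∧ x + y - x - y = 0})
        = ∑ x : ZMod n, Nat.card {y : ZMod n // -x + circ x y - y = 0 ∧
        -y + circ y x - x = 0 ∧ x + y - x - y = 0} := by
      simp [Nat.card_eq_fintype_card, Fintype.card_sigma]
    rw [this]
    simp_rw [hcard5]
    rw [Nat.cast_sum]
    have hn0 : ((n : ℚ)) ≠ 0 := Nat.cast_ne_zero.mpr (NeZero.ne n)
    field_simp
end
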